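/- arXiv:1508.03359 — 2 statements merged into one kernel-verified Lean document; each statement's English description precedes it below -/
import Mathlib

section
/- Let u, v ∈ ℂⁿ (n ≥ 2), where v has pairwise distinct coordinates, let 1 ≤ p ≤ ∞ with conjugate exponent q. Then for all indices i ≠ j, |uᵢ - uⱼ| ≥ (1 - 2^{1/q} ‖(u - v)/d(v)‖_p) |vᵢ - vⱼ|, where d(v)ᵢ = min_{j ≠ i} |vᵢ - vⱼ|. -/
/-!
With `w k = ‖u k - v k‖ / d(v) k`, the bound `d(v) i ≤ ‖v i - v j‖` gives
`‖u i - v i‖ ≤ w i ‖v i - v j‖`, and likewise for `j`. Hölder's inequality against the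
indicator of `{i, j}` gives `w i + w j ≤ 2 ^ (1/q) ‖w‖_p`, and the triangle inequality
`‖v i - v j‖ ≤ ‖u i - v i‖ + ‖u i - u j‖ + ‖u j - v j‖` finishes.
-/

open scoped ENNReal

noncomputable def pnorm (p : ℝ≥0∞) {n : ℕ} (w : Fin n → ℝ) : ℝ :=
  ‖(WithLp.equiv p (Fin n → ℝ)).symm w‖

noncomputable def dmin {n : ℕ} (v : Fin n → ℂ) (i : Fin n) : ℝ :=
  ⨅ j : {j : Fin n // j ≠ i}, ‖v i - v j.1‖

open Finset

lemma ENNReal.toReal_one_div_eq_one_sub {p q : ℝ≥0∞} (hpq : 1 / p + 1 / q = 1) :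
    (1 / q).toReal = 1 - (1 / p).toReal := by
  have hp : 1 / p ≠ ∞ := ne_top_of_le_ne_top one_ne_top (le_self_add.trans_eq hpq)
  have hq : 1 / q ≠ ∞ := ne_top_of_le_ne_top one_ne_top (le_add_self.trans_eq hpq)
  have := congrArg ENNReal.toReal hpq
  rw [ENNReal.toReal_add hp hq, ENNReal.toReal_one] at this
  linarith

lemma pnorm_eq_sum {n : ℕ} {p : ℝ≥0∞} (hp : 0 < p.toReal) (w : Fin n → ℝ) :
    pnorm p w = (∑ k, |w k| ^ p.toReal) ^ (1 / p.toReal) :=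
  PiLp.norm_eq_sum hp _

lemma abs_le_pnorm {n : ℕ} (p : ℝ≥0∞) [Fact (1 ≤ p)] (w : Fin n → ℝ) (k : Fin n) :
    |w k| ≤ pnorm p w :=
  PiLp.norm_apply_le ((WithLp.equiv p (Fin n → ℝ)).symm w) k

lemma sum_abs_le_card_rpow_mul_pnorm {n : ℕ} {p q : ℝ≥0∞} [Fact (1 ≤ p)]
    (hpq : 1 / p + 1 / q = 1) (w : Fin n → ℝ) (s : Finset (Fin n)) :
    ∑ k ∈ s, |w k| ≤ (#s : ℝ) ^ (1 / q).toReal * pnorm p w := by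
  rw [ENNReal.toReal_one_div_eq_one_sub hpq]
  rcases eq_or_ne p ∞ with rfl | hp
  · simpa using sum_le_sum fun k _ => abs_le_pnorm ∞ w k
  set P := p.toReal
  have hP : 1 ≤ P := by simpa using ENNReal.toReal_mono hp (Fact.out : 1 ≤ p)
  have hP0 : 0 < P := one_pos.trans_le hP
  rw [ENNReal.toReal_div, ENNReal.toReal_one, pnorm_eq_sum hP0]
  calc ∑ k ∈ s, |w k| = ((∑ k ∈ s, |w k|) ^ P) ^ (1 / P) := by
        rw [one_div, Real.rpow_rpow_inv (by positivity) hP0.ne']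
    _ ≤ ((#s : ℝ) ^ (P - 1) * ∑ k ∈ s, |w k| ^ P) ^ (1 / P) := by
        gcongr; exact Real.rpow_sum_le_const_mul_sum_rpow s w hP
    _ ≤ ((#s : ℝ) ^ (P - 1) * ∑ k, |w k| ^ P) ^ (1 / P) := by
        gcongr
        exact subset_univ s
    _ = (#s : ℝ) ^ (1 - 1 / P) * (∑ k, |w k| ^ P) ^ (1 / P) := by
        rw [Real.mul_rpow (by positivity) (by positivity), ← Real.rpow_mul (by positivity),
          sub_mul, one_mul, mul_one_div_cancel hP0.ne']

section dmin

variable {n : ℕ} {v : Fin n → ℂ} {i j : Fin n}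

lemma dmin_nonneg : 0 ≤ dmin v i :=
  Real.iInf_nonneg fun _ => norm_nonneg _

lemma dmin_le_norm_sub (h : j ≠ i) : dmin v i ≤ ‖v i - v j‖ :=
  ciInf_le (Set.finite_range _).bddBelow (⟨j, h⟩ : {k // k ≠ i})

lemma dmin_pos (hv : Function.Injective v) (h : j ≠ i) : 0 < dmin v i := by
  have : Nonempty {k // k ≠ i} := ⟨⟨j, h⟩⟩
  obtain ⟨k, hk⟩ := exists_eq_ciInf_of_finite (f := fun k : {k // k ≠ i} => ‖v i - v k.1‖)
  rw [dmin, ← hk]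
  exact norm_pos_iff.2 (sub_ne_zero.2 (hv.ne k.2.symm))

lemma norm_sub_le_div_dmin_mul (u : Fin n → ℂ) (hv : Function.Injective v) (h : j ≠ i) :
    ‖u i - v i‖ ≤ ‖u i - v i‖ / dmin v i * ‖v i - v j‖ := by
  rw [div_mul_eq_mul_div, le_div_iff₀ (dmin_pos hv h)]
  exact mul_le_mul_of_nonneg_left (dmin_le_norm_sub h) (norm_nonneg _)

end dmin

theorem u_v_inequality_basic_2_general (n : ℕ) (u v : Fin n → ℂ)
    (hv : Function.Injective v) (p q : ℝ≥0∞) (hp : 1 ≤ p) (hpq : 1/p + 1/q = 1) :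
    ∀ i j : Fin n, i ≠ j →
      (1 - (2:ℝ) ^ (1/q).toReal * pnorm p (fun k => ‖u k - v k‖ / dmin v k))
          * ‖v i - v j‖
        ≤ ‖u i - u j‖ := by
  intro i j hij
  have : Fact (1 ≤ p) := ⟨hp⟩
  set w : Fin n → ℝ := fun k => ‖u k - v k‖ / dmin v k
  have hw : w i + w j ≤ 2 ^ (1/q).toReal * pnorm p w := by
    have := sum_abs_le_card_rpow_mul_pnorm hpq w {i, j}
    have hw0 : ∀ k, 0 ≤ w k := fun k => div_nonneg (norm_nonneg _) dmin_nonneg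
    rwa [sum_pair hij, card_pair hij, abs_of_nonneg (hw0 i), abs_of_nonneg (hw0 j)] at this
  have hi : ‖u i - v i‖ ≤ w i * ‖v i - v j‖ := norm_sub_le_div_dmin_mul u hv hij.symm
  have hj : ‖u j - v j‖ ≤ w j * ‖v i - v j‖ :=
    norm_sub_rev (v i) (v j) ▸ norm_sub_le_div_dmin_mul u hv hij
  have htri : ‖v i - v j‖ ≤ ‖u i - v i‖ + ‖u i - u j‖ + ‖u j - v j‖ := by
    simpa only [dist_eq_norm, norm_sub_rev (v i), norm_sub_rev (u j)] using
      dist_triangle4 (v i) (u i) (u j) (v j)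
  linarith [mul_le_mul_of_nonneg_right hw (norm_nonneg (v i - v j))]

theorem u_v_inequality_basic_2 (n : ℕ) (hn : 2 ≤ n) (u v : Fin n → ℂ)
    (hv : Function.Injective v) (p q : ℝ≥0∞) (hp : 1 ≤ p) (hpq : 1/p + 1/q = 1) :
    ∀ i j : Fin n, i ≠ j →
      (1 - (2:ℝ) ^ (1/q).toReal * pnorm p (fun k => ‖u k - v k‖ / dmin v k))
          * ‖v i - v j‖
        ≤ ‖u i - u j‖ :=
  u_v_inequality_basic_2_general n u v hv p q hp hpq
end

section
/- With a > 0 and R = 2/(3+√(1+8a)), each β_N (N ≥ 1), defined by β_N(t) = at²φ_{N-1}(t)/(1 - t - at²φ_{N-1}(t)) on [0,R], is quasi-homogeneous of degree 2N on [0,R]. -/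
noncomputable def phiN (a b : ℝ) : ℕ → ℝ → ℝ
  | 0, _ => 1
  | N+1, t => a * t^2 * phiN a b N t / ((1 - t) * (1 - b*t) - a * t^2 * phiN a b N t)

noncomputable def betaN (a : ℝ) (N : ℕ) (t : ℝ) : ℝ :=
  a * t^2 * phiN a 2 (N-1) t / (1 - t - a * t^2 * phiN a 2 (N-1) t)

lemma sqrt_gt_one (a : ℝ) (ha : 0 < a) : 1 < Real.sqrt (1 + 8*a) := by
  nlinarith [Real.sq_sqrt (by linarith : (0:ℝ) ≤ 1 + 8*a),
    Real.sqrt_nonneg (1 + 8*a)]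

lemma key_ineq (a : ℝ) (ha : 0 < a) (t : ℝ) (ht0 : 0 ≤ t)
    (htR : t ≤ 2 / (3 + Real.sqrt (1 + 8*a))) :
    2*a*t^2 ≤ (1-t)*(1-2*t) := by
  set s := Real.sqrt (1 + 8*a) with hs
  have hs1 : 1 < s := sqrt_gt_one a ha
  have hsq : s^2 = 1 + 8*a := Real.sq_sqrt (by linarith)
  have h3 : (0:ℝ) < 3 + s := by linarith
  have ht : t * (3+s) ≤ 2 := by
    rw [← le_div_iff₀ h3]; exact htR
  have h1 : 0 ≤ 2 - t*(3+s) := by linarith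
  have h2 : 0 ≤ 2*s + s*(t*(3+s)) := by positivity
  nlinarith [mul_nonneg h1 h2, sq_nonneg (2 - t*(3+s))]

lemma R_lt_half (a : ℝ) (ha : 0 < a) : 2 / (3 + Real.sqrt (1 + 8*a)) < 1/2 := by
  have hs1 : 1 < Real.sqrt (1 + 8*a) := sqrt_gt_one a ha
  rw [div_lt_div_iff₀ (by linarith) (by norm_num)]
  linarith

lemma phi_main (a : ℝ) (ha : 0 < a) (R : ℝ)
    (hR : R = 2 / (3 + Real.sqrt (1 + 8*a))) (N : ℕ) :
    ∀ t ∈ Set.Icc (0:ℝ) R, (0 ≤ phiN a 2 N t ∧ phiN a 2 N t ≤ 1) ∧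
      ∀ lam ∈ Set.Icc (0:ℝ) 1, phiN a 2 N (lam*t) ≤ lam^(2*N) * phiN a 2 N t := by
  have hRh : R < 1/2 := hR ▸ R_lt_half a ha
  induction N with
  | zero =>
    intro t ht
    refine ⟨⟨by norm_num [phiN], by norm_num [phiN]⟩, ?_⟩
    intro lam hlam
    simp [phiN]
  | succ N ih =>
    intro t ht
    obtain ⟨ht0, htR⟩ := ht
    have hkey : 2*a*t^2 ≤ (1-t)*(1-2*t) := key_ineq a ha t ht0 (hR ▸ htR)
    have hth : t < 1/2 := lt_of_le_of_lt htR hRh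
    obtain ⟨⟨hp0, hp1⟩, hq⟩ := ih t ⟨ht0, htR⟩
    constructor
    · simp only [phiN]
      obtain ⟨x, hx⟩ : ∃ x, x = a * t^2 * phiN a 2 N t := ⟨_, rfl⟩
      rw [← hx]
      have hx0 : 0 ≤ x := by
        rw [hx]; exact mul_nonneg (by positivity) hp0
      have hx1 : x ≤ a*t^2 := by
        rw [hx]
        nlinarith [mul_nonneg (mul_nonneg ha.le (sq_nonneg t)) (sub_nonneg.mpr hp1)]
      have hden : 0 < (1-t)*(1-2*t) - x := by nlinarith
      constructor
      · positivity
      · rw [div_le_one hden]; linarith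
    · intro lam hlam
      obtain ⟨hl0, hl1⟩ := hlam
      have hlt : lam * t ∈ Set.Icc (0:ℝ) R :=
        ⟨mul_nonneg hl0 ht0, by nlinarith⟩
      have hqlt := hq lam ⟨hl0, hl1⟩
      obtain ⟨⟨hp0', hp1'⟩, -⟩ := ih (lam*t) hlt
      simp only [phiN]
      obtain ⟨x, hx⟩ : ∃ x, x = a * t^2 * phiN a 2 N t := ⟨_, rfl⟩
      obtain ⟨y, hy⟩ : ∃ y, y = a * (lam*t)^2 * phiN a 2 N (lam*t) := ⟨_, rfl⟩
      have hx0 : 0 ≤ x := by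
        rw [hx]; exact mul_nonneg (by positivity) hp0
      have hy0 : 0 ≤ y := by
        rw [hy]; exact mul_nonneg (by positivity) hp0'
      have hx1 : x ≤ a*t^2 := by
        rw [hx]
        nlinarith [mul_nonneg (mul_nonneg ha.le (sq_nonneg t)) (sub_nonneg.mpr hp1)]
      have hden : 0 < (1-t)*(1-2*t) - x := by nlinarith
      have hnum : y ≤ lam^(2*(N+1)) * x := by
        have hpow : lam^(2*(N+1)) = lam^(2*N) * lam^2 := by
          rw [mul_add, mul_one, pow_add]
        have h := mul_le_mul_of_nonneg_left hqlt
          (by positivity : (0:ℝ) ≤ a * (lam*t)^2)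
        calc y = a * (lam*t)^2 * phiN a 2 N (lam*t) := hy
          _ ≤ a * (lam*t)^2 * (lam^(2*N) * phiN a 2 N t) := h
          _ = lam^(2*(N+1)) * x := by rw [hpow, hx]; ring
      have hpowle : lam^(2*(N+1)) ≤ 1 := pow_le_one₀ hl0 hl1
      have hnum2 : y ≤ x := by nlinarith
      have hdenD : (1-t)*(1-2*t) ≤ (1-lam*t)*(1-2*(lam*t)) := by
        have h1 : 0 ≤ t - lam*t := by nlinarith
        have h2 : 0 ≤ 3 - 2*t - 2*(lam*t) := by nlinarith
        nlinarith [mul_nonneg h1 h2]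
      rw [← hx, ← hy, mul_div_assoc']
      apply div_le_div₀ (mul_nonneg (pow_nonneg hl0 _) hx0) hnum hden
      linarith

theorem betaN_quasi_homogeneous (a : ℝ) (ha : 0 < a)
    (R : ℝ) (hR : R = 2 / (3 + Real.sqrt (1 + 8*a))) :
    ∀ N : ℕ, 1 ≤ N → ∀ lam ∈ Set.Icc (0:ℝ) 1, ∀ t ∈ Set.Icc (0:ℝ) R,
      betaN a N (lam * t) ≤ lam ^ (2*N) * betaN a N t := by
  intro N hN lam hlam t ht
  obtain ⟨M, rfl⟩ := Nat.exists_eq_add_of_le hN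
  have hM : 1 + M - 1 = M := by omega
  obtain ⟨hl0, hl1⟩ := hlam
  obtain ⟨ht0, htR⟩ := ht
  have hRh : R < 1/2 := hR ▸ R_lt_half a ha
  have hth : t < 1/2 := lt_of_le_of_lt htR hRh
  have hkey : 2*a*t^2 ≤ (1-t)*(1-2*t) := key_ineq a ha t ht0 (hR ▸ htR)
  obtain ⟨⟨hp0, hp1⟩, hq⟩ := phi_main a ha R hR M t ⟨ht0, htR⟩
  have hlt : lam * t ∈ Set.Icc (0:ℝ) R := ⟨mul_nonneg hl0 ht0, by nlinarith⟩
  have hqlt := hq lam ⟨hl0, hl1⟩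
  obtain ⟨⟨hp0', hp1'⟩, -⟩ := phi_main a ha R hR M (lam*t) hlt
  unfold betaN
  rw [hM]
  obtain ⟨x, hx⟩ : ∃ x, x = a * t^2 * phiN a 2 M t := ⟨_, rfl⟩
  obtain ⟨y, hy⟩ : ∃ y, y = a * (lam*t)^2 * phiN a 2 M (lam*t) := ⟨_, rfl⟩
  have hx0 : 0 ≤ x := by rw [hx]; exact mul_nonneg (by positivity) hp0
  have hy0 : 0 ≤ y := by rw [hy]; exact mul_nonneg (by positivity) hp0'
  have hx1 : x ≤ a*t^2 := by
    rw [hx]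
    nlinarith [mul_nonneg (mul_nonneg ha.le (sq_nonneg t)) (sub_nonneg.mpr hp1)]
  have hden : 0 < 1 - t - x := by nlinarith
  have hnum : y ≤ lam^(2*(1+M)) * x := by
    have hpow : lam^(2*(1+M)) = lam^(2*M) * lam^2 := by
      rw [mul_add, mul_one, pow_add]; ring
    have h := mul_le_mul_of_nonneg_left hqlt
      (by positivity : (0:ℝ) ≤ a * (lam*t)^2)
    calc y = a * (lam*t)^2 * phiN a 2 M (lam*t) := hy
      _ ≤ a * (lam*t)^2 * (lam^(2*M) * phiN a 2 M t) := h
      _ = lam^(2*(1+M)) * x := by rw [hpow, hx]; ring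
  have hpowle : lam^(2*(1+M)) ≤ 1 := pow_le_one₀ hl0 hl1
  have hnum2 : y ≤ x := by nlinarith
  rw [← hx, ← hy, mul_div_assoc']
  apply div_le_div₀ (mul_nonneg (pow_nonneg hl0 _) hx0) hnum hden
  nlinarith
end
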